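/- arXiv:1810.10214 — 2 statements merged into one kernel-verified Lean document; each statement's English description precedes it below -/
import Mathlib

section
/- Let Γ = (κ_{ij}) be an m × m symmetric positive semidefinite matrix with unit diagonal, and let p_ν be a unit eigenvector of Γ with eigenvalue ℓ_ν, ℓ₁ being the largest eigenvalue of Γ. Then the strict inequality Σ_{i,j} (p_{ν,i} κ_{ij} p_{ν,j})² < 2 ℓ_ν Σ_i p_{ν,i}⁴ (equivalently, Δ_ν = 2 ℓ_ν Σ_i p_{ν,i}⁴ − Σ_{i,j} (p_{ν,i} κ_{ij} p_{ν,j})² > 0) holds in each of the following cases: (i) all entries of Γ and all entries of p_ν are non-negative; (ii) 2 ℓ_ν Σ_i p_{ν,i}⁴ > 1; (iii) 2 ℓ_ν > ℓ₁². -/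
/-!
Write `q i j = p i * κ i j * p j`. Case (ii) only needs `κ i j ^ 2 ≤ 1`, which gives
`∑ q² ≤ (∑ p²)² = 1`. Cases (i) and (iii) rest on the AM–GM symmetrization
`∑ w i j * x i * x j ≤ ∑ i, x i ^ 2 * ∑ j, w i j` for symmetric nonnegative weights `w`.

In case (i) take `w = q` and `x = p`: as `0 ≤ κ ≤ 1` we have `q² ≤ q * p i * p j`, and the row sums
of `q` are `ℓ_ν p_i²` by the eigenvalue equation, so `∑ q² ≤ ℓ_ν ∑ p⁴`; the diagonal terms give
`∑ p⁴ ≤ ∑ q²`, so `ℓ_ν ∑ p⁴ > 0`.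

In case (iii) take `w = κ²` and `x = p²`: the row sums of `κ²` are `(Γ²)_ii ≤ ℓ₁ Γ_ii = ℓ₁`, since
`Γ ≤ ℓ₁ I` conjugated by `√Γ` gives `Γ² ≤ ℓ₁ Γ`; and `ℓ₁ ≥ (Γ²)_ii ≥ κ_ii² = 1`, so
`∑ q² ≤ ℓ₁² ∑ p⁴`.
-/

open Matrix

section FiniteSums

variable {ι : Type*} [Fintype ι] {w : ι → ι → ℝ}

theorem sum_sum_mul_add_eq_of_symm (hw : ∀ i j, w i j = w j i) (y : ι → ℝ) :
    ∑ i, ∑ j, w i j * (y i + y j) = 2 * ∑ i, y i * ∑ j, w i j := by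
  have hswap : ∑ i, ∑ j, w i j * y j = ∑ i, ∑ j, w i j * y i := by
    rw [Finset.sum_comm]; simp_rw [hw]
  simp_rw [mul_add, Finset.sum_add_distrib, hswap, two_mul, Finset.mul_sum, mul_comm]

theorem sum_sum_mul_mul_le_of_symm (hw₀ : ∀ i j, 0 ≤ w i j) (hw : ∀ i j, w i j = w j i)
    (x : ι → ℝ) : ∑ i, ∑ j, w i j * (x i * x j) ≤ ∑ i, x i ^ 2 * ∑ j, w i j := by
  calc ∑ i, ∑ j, w i j * (x i * x j) ≤ ∑ i, ∑ j, w i j * ((x i ^ 2 + x j ^ 2) / 2) := by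
        gcongr with i _ j _
        · exact hw₀ i j
        · nlinarith [sq_nonneg (x i - x j)]
    _ = ∑ i, x i ^ 2 * ∑ j, w i j := by
        simp_rw [← mul_div_assoc, ← Finset.sum_div, sum_sum_mul_add_eq_of_symm hw]
        ring

theorem sum_pow_four_pos {p : ι → ℝ} (hp : p ≠ 0) : 0 < ∑ i, p i ^ 4 := by
  obtain ⟨i, hi⟩ : ∃ i, p i ≠ 0 := Function.ne_iff.mp hp
  exact Finset.sum_pos' (fun j _ => by positivity) ⟨i, Finset.mem_univ i, by positivity⟩

end FiniteSums

namespace Matrix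

variable {n : Type*} {A : Matrix n n ℝ}

theorem PosSemidef.apply_sq_le (hA : A.PosSemidef) (i j : n) : A i j ^ 2 ≤ A i i * A j j := by
  have h := (hA.submatrix ![i, j]).det_nonneg
  rw [det_fin_two] at h
  simp only [Fin.isValue, submatrix_apply, cons_val_zero, cons_val_one, cons_val_fin_one,
    (isHermitian_iff_isSymm.mp hA.1).apply i j, sub_nonneg] at h
  nlinarith

variable [Fintype n]

open scoped MatrixOrder in
theorem IsHermitian.le_smul_one_of_eigenvalue_le [DecidableEq n] (hA : A.IsHermitian) {c : ℝ}
    (h : ∀ (μ : ℝ) (w : n → ℝ), w ≠ 0 → A *ᵥ w = μ • w → μ ≤ c) : A ≤ c • 1 := by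
  rw [← Algebra.algebraMap_eq_smul_one]
  refine le_algebraMap_of_spectrum_le (fun μ hμ => ?_) hA
  rw [← spectrum_toLin'] at hμ
  obtain ⟨w, hw⟩ := (Module.End.hasEigenvalue_iff_mem_spectrum.mpr hμ).exists_hasEigenvector
  exact h μ w hw.2 (by simpa using hw.apply_eq_smul)

open scoped MatrixOrder in
theorem PosSemidef.mul_self_le_smul [DecidableEq n] (hA : A.PosSemidef) {c : ℝ} (hc : A ≤ c • 1) :
    A * A ≤ c • A := by
  set s := CFC.sqrt A
  have hss : s * s = A := CFC.sqrt_mul_sqrt_self A hA.nonneg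
  have hs : star s = s := (CFC.sqrt_nonneg A).isSelfAdjoint
  have hconj : s * A * s = A * A := by rw [← hss]; simp only [mul_assoc]
  simpa [hs, hss, hconj] using star_left_conjugate_le_conjugate hc s

open scoped MatrixOrder in
theorem sum_sq_apply_le_of_mul_self_le (hA : A.IsSymm) {c : ℝ} (h : A * A ≤ c • A) (i : n) :
    ∑ j, A i j ^ 2 ≤ c * A i i := by
  have hrow : ∑ j, A i j ^ 2 = (A * A) i i :=
    Finset.sum_congr rfl fun j _ => by simp only [sq, hA.apply i j]
  have hdiag := (le_iff.mp h).diag_nonneg (i := i)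
  rw [sub_apply, smul_apply, smul_eq_mul] at hdiag
  linarith

variable {p : n → ℝ}

theorem sum_pow_four_le_sum_sum_sq_mul_apply_mul (hdiag : ∀ i, A i i = 1) :
    ∑ i, p i ^ 4 ≤ ∑ i, ∑ j, (p i * A i j * p j) ^ 2 := by
  gcongr with i
  calc p i ^ 4 = (p i * A i i * p i) ^ 2 := by rw [hdiag]; ring
    _ ≤ _ := Finset.single_le_sum (fun j _ => sq_nonneg (p i * A i j * p j)) (Finset.mem_univ i)

theorem sum_sum_sq_mul_apply_mul_le_of_sq_le_one (h : ∀ i j, A i j ^ 2 ≤ 1) :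
    ∑ i, ∑ j, (p i * A i j * p j) ^ 2 ≤ (∑ i, p i ^ 2) ^ 2 := by
  calc ∑ i, ∑ j, (p i * A i j * p j) ^ 2 ≤ ∑ i, ∑ j, p i ^ 2 * p j ^ 2 := by
        gcongr with i _ j _
        nlinarith [h i j, sq_nonneg (p i * p j)]
    _ = (∑ i, p i ^ 2) ^ 2 := by rw [sq, Finset.sum_mul_sum]

theorem sum_sum_sq_mul_apply_mul_le_of_sum_sq_apply_le (hA : A.IsSymm) {c : ℝ}
    (h : ∀ i, ∑ j, A i j ^ 2 ≤ c) :
    ∑ i, ∑ j, (p i * A i j * p j) ^ 2 ≤ c * ∑ i, p i ^ 4 := by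
  calc ∑ i, ∑ j, (p i * A i j * p j) ^ 2 = ∑ i, ∑ j, A i j ^ 2 * (p i ^ 2 * p j ^ 2) := by
        simp only [mul_pow, mul_comm, mul_left_comm]
    _ ≤ ∑ i, (p i ^ 2) ^ 2 * ∑ j, A i j ^ 2 :=
        sum_sum_mul_mul_le_of_symm (fun _ _ => sq_nonneg _) (fun i j => by rw [hA.apply]) _
    _ ≤ ∑ i, (p i ^ 2) ^ 2 * c := by gcongr with i; exact h i
    _ = c * ∑ i, p i ^ 4 := by rw [Finset.mul_sum]; exact Finset.sum_congr rfl fun i _ => by ring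

theorem sum_sum_sq_mul_apply_mul_le_of_nonneg (hA : A.IsSymm) (hA₀ : ∀ i j, 0 ≤ A i j)
    (hA₁ : ∀ i j, A i j ≤ 1) (hp : ∀ i, 0 ≤ p i) {ℓ : ℝ} (heig : A *ᵥ p = ℓ • p) :
    ∑ i, ∑ j, (p i * A i j * p j) ^ 2 ≤ ℓ * ∑ i, p i ^ 4 := by
  have hrow : ∀ i, ∑ j, p i * A i j * p j = ℓ * p i ^ 2 := fun i => by
    have := congrFun heig i
    simp only [mulVec, dotProduct, Pi.smul_apply, smul_eq_mul] at this
    simp only [mul_assoc, ← Finset.mul_sum, this]; ring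
  calc ∑ i, ∑ j, (p i * A i j * p j) ^ 2 ≤ ∑ i, ∑ j, p i * A i j * p j * (p i * p j) := by
        gcongr with i _ j _
        have hsq : A i j ^ 2 ≤ A i j := by nlinarith [hA₀ i j, hA₁ i j]
        nlinarith [mul_le_mul_of_nonneg_right hsq (sq_nonneg (p i * p j))]
    _ ≤ ∑ i, p i ^ 2 * ∑ j, p i * A i j * p j :=
        sum_sum_mul_mul_le_of_symm (fun i j => mul_nonneg (mul_nonneg (hp i) (hA₀ i j)) (hp j))
          (fun i j => by rw [hA.apply]; ring) _
    _ = ℓ * ∑ i, p i ^ 4 := by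
        rw [Finset.mul_sum]; exact Finset.sum_congr rfl fun i _ => by rw [hrow]; ring

end Matrix

theorem variance_reduction_condition_general
    {m : ℕ} (Γ : Matrix (Fin m) (Fin m) ℝ)
    (hpsd : Γ.PosSemidef) (hdiag : ∀ i, Γ i i = 1)
    (pν : Fin m → ℝ) (ℓν : ℝ)
    (hunit : ∑ i, (pν i) ^ 2 = 1)
    (heig : Γ.mulVec pν = ℓν • pν)
    (ℓ1 : ℝ)
    (hℓ1max : ∀ (μ : ℝ) (w : Fin m → ℝ), w ≠ 0 → Γ.mulVec w = μ • w → μ ≤ ℓ1)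
    (hcase :
      ((∀ i j, 0 ≤ Γ i j) ∧ (∀ i, 0 ≤ pν i))
        ∨ 1 < 2 * ℓν * ∑ i, (pν i) ^ 4
        ∨ ℓ1 ^ 2 < 2 * ℓν) :
    ∑ i, ∑ j, (pν i * Γ i j * pν j) ^ 2 < 2 * ℓν * ∑ i, (pν i) ^ 4 := by
  have hsymm : Γ.IsSymm := isHermitian_iff_isSymm.mp hpsd.1
  have hentry (i j : Fin m) : Γ i j ^ 2 ≤ 1 := by simpa [hdiag] using hpsd.apply_sq_le i j
  have hquart : 0 < ∑ i, pν i ^ 4 := sum_pow_four_pos (by rintro rfl; simp at hunit)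
  rcases hcase with ⟨hΓ, hpν⟩ | hbig | hgap
  · have hle := sum_sum_sq_mul_apply_mul_le_of_nonneg hsymm hΓ
      (fun i j => (sq_le_one_iff₀ (hΓ i j)).mp (hentry i j)) hpν heig
    have hge := sum_pow_four_le_sum_sum_sq_mul_apply_mul (p := pν) hdiag
    linarith
  · have := sum_sum_sq_mul_apply_mul_le_of_sq_le_one (p := pν) hentry
    rw [hunit] at this
    linarith
  · have hrow (i : Fin m) : ∑ j, Γ i j ^ 2 ≤ ℓ1 ^ 2 := by
      have hle := sum_sq_apply_le_of_mul_self_le hsymm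
        (hpsd.mul_self_le_smul (hpsd.1.le_smul_one_of_eigenvalue_le hℓ1max)) i
      have hge : Γ i i ^ 2 ≤ ∑ j, Γ i j ^ 2 :=
        Finset.single_le_sum (fun j _ => sq_nonneg (Γ i j)) (Finset.mem_univ i)
      rw [hdiag] at hle hge
      nlinarith
    calc ∑ i, ∑ j, (pν i * Γ i j * pν j) ^ 2 ≤ ℓ1 ^ 2 * ∑ i, pν i ^ 4 :=
          sum_sum_sq_mul_apply_mul_le_of_sum_sq_apply_le hsymm hrow
      _ < 2 * ℓν * ∑ i, pν i ^ 4 := mul_lt_mul_of_pos_right hgap hquart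

/-- **Variance-reduction condition (24)**: let `Γ = (κ_{ij})` be an `m × m` correlation
matrix (symmetric positive semidefinite with unit diagonal) and `p_ν` a unit eigenvector
with eigenvalue `ℓ_ν`, `ℓ₁` being the largest eigenvalue of `Γ`. Then
`∑_{i,j} (p_{ν,i} κ_{ij} p_{ν,j})² < 2 ℓ_ν ∑_i p_{ν,i}⁴` (equivalently `Δ_ν > 0`)
holds in each of the following cases:
(i) all entries of `Γ` and of `p_ν` are non-negative;
(ii) `2 ℓ_ν ∑_i p_{ν,i}⁴ > 1`;
(iii) `2 ℓ_ν > ℓ₁²`. -/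
theorem variance_reduction_condition
    {m : ℕ} (Γ : Matrix (Fin m) (Fin m) ℝ)
    (hpsd : Γ.PosSemidef) (hdiag : ∀ i, Γ i i = 1)
    (pν : Fin m → ℝ) (ℓν : ℝ)
    (hunit : ∑ i, (pν i) ^ 2 = 1)
    (heig : Γ.mulVec pν = ℓν • pν)
    (ℓ1 : ℝ)
    (hℓ1max : ∀ (μ : ℝ) (w : Fin m → ℝ), w ≠ 0 → Γ.mulVec w = μ • w → μ ≤ ℓ1)
    (hℓ1eig : ∃ w : Fin m → ℝ, w ≠ 0 ∧ Γ.mulVec w = ℓ1 • w)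
    (hcase :
      ((∀ i j, 0 ≤ Γ i j) ∧ (∀ i, 0 ≤ pν i))
        ∨ 1 < 2 * ℓν * ∑ i, (pν i) ^ 4
        ∨ ℓ1 ^ 2 < 2 * ℓν) :
    ∑ i, ∑ j, (pν i * Γ i j * pν j) ^ 2 < 2 * ℓν * ∑ i, (pν i) ^ 4 :=
  variance_reduction_condition_general Γ hpsd hdiag pν ℓν hunit heig ℓ1 hℓ1max hcase
end

section
/- Let ξ̄ ∈ ℝ^m be a centered Gaussian random vector with unit variances and covariance (correlation) matrix Γ = (κ_{ij}), and let p_ν be a unit eigenvector of Γ with eigenvalue ℓ_ν. With ψ_{ij} = κ_{ij}(ξ̄_i² + ξ̄_j²)/2 and χ_{ij} = ξ̄_i ξ̄_j, define κ̌₁_{iji'j'} = Cov(ψ_{ij}, ψ_{i'j'}) and κ̌₂_{iji'j'} = Cov(ψ_{ij}, χ_{i'j'}). Then [𝒫^ν, κ̌₁] = 2 ℓ_ν² tr (P_{D,ν} Γ P_{D,ν})² and [𝒫^ν, κ̌₂] = 2 ℓ_ν³ tr P_{D,ν}⁴, so that [𝒫^ν, κ̌] = [𝒫^ν, κ̌₁]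 − 2 [𝒫^ν, κ̌₂] = 2 ℓ_ν² tr (P_{D,ν} Γ P_{D,ν})² − 4 ℓ_ν³ tr P_{D,ν}⁴, where P_{D,ν} = diag(p_{ν,1}, …, p_{ν,m}). -/
/-!
Contracting with `p ⊗ p` collapses the family `ψ_{ij}` to the single random variable
`ℓ ∑ᵢ pᵢ² ξᵢ²` (because `Γ` is symmetric and `Γ p = ℓ p`) and the family `χ_{ij}` to `(p ⬝ ξ)²`,
so by bilinearity each contracted covariance is the covariance of two quadratic forms in `ξ`.
These are evaluated with Isserlis' identity `Cov(X², Y²) = 2 (E XY)²` for jointly centered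
Gaussian `X, Y`, which follows by polarization from the fourth moment `E Z⁴ = 3 (E Z²)²` of a
centered Gaussian `Z`: it gives `Cov(ξᵢ², ξⱼ²) = 2 κᵢⱼ²` and `Cov(ξᵢ², (p ⬝ ξ)²) = 2 ℓ² pᵢ²`.
-/

open MeasureTheory ProbabilityTheory Matrix
open scoped NNReal ENNReal

namespace MeasureTheory

variable {α : Type*} {mα : MeasurableSpace α} {μ : Measure α}

lemma MemLp.integrable_pow {f : α → ℝ} {n : ℕ} (hf : MemLp f n μ) (hn : n ≠ 0) :
    Integrable (fun x => f x ^ n) μ :=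
  (integrable_norm_iff (hf.1.pow n)).mp
    (by simpa only [Pi.pow_apply, norm_pow] using hf.integrable_norm_pow hn)

lemma MemLp.mul_of_four {f g : α → ℝ} (hf : MemLp f 4 μ) (hg : MemLp g 4 μ) :
    MemLp (fun x => f x * g x) 2 μ :=
  haveI : ENNReal.HolderTriple 4 4 2 := ⟨by
    rw [← ENNReal.toReal_eq_toReal_iff' (by simp) (by simp),
      ENNReal.toReal_add (by simp) (by simp)]
    norm_num⟩
  hg.mul' hf

end MeasureTheory

lemma deriv_mul_exp_mul_sq_div_two (v : ℝ) (P P' : ℝ → ℝ) (hP : ∀ t, HasDerivAt P (P' t) t) :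
    deriv (fun t => P t * Real.exp (v * t ^ 2 / 2))
      = fun t => (P' t + v * t * P t) * Real.exp (v * t ^ 2 / 2) := by
  funext t
  have h : HasDerivAt (fun t => v * t ^ 2 / 2) (v * t) t :=
    (((hasDerivAt_pow 2 t).const_mul v).div_const 2).congr_deriv (by push_cast; ring)
  exact ((hP t).mul h.exp).deriv.trans (by ring)

lemma integral_pow_four_gaussianReal (v : ℝ≥0) :
    ∫ x, x ^ 4 ∂gaussianReal 0 v = 3 * (v : ℝ) ^ 2 := by
  have h := iteratedDeriv_mgf_zero (X := fun x => x) (μ := gaussianReal 0 v) (by simp) 4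
  simp only [mgf_fun_id_gaussianReal, zero_mul, zero_add, Pi.pow_apply] at h
  rw [← h]
  set w : ℝ := (v : ℝ)
  have d1 : deriv (fun t => Real.exp (w * t ^ 2 / 2))
      = fun t => w * t * Real.exp (w * t ^ 2 / 2) := by
    simpa using deriv_mul_exp_mul_sq_div_two w (fun _ => 1) (fun _ => 0)
      (fun t => hasDerivAt_const t 1)
  have d2 : deriv (fun t => w * t * Real.exp (w * t ^ 2 / 2))
      = fun t => (w + w ^ 2 * t ^ 2) * Real.exp (w * t ^ 2 / 2) :=
    (deriv_mul_exp_mul_sq_div_two w (fun t => w * t) (fun _ => w)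
      (fun t => ((hasDerivAt_id t).const_mul w).congr_deriv (mul_one w))).trans
      (by funext t; ring)
  have d3 : deriv (fun t => (w + w ^ 2 * t ^ 2) * Real.exp (w * t ^ 2 / 2))
      = fun t => (3 * w ^ 2 * t + w ^ 3 * t ^ 3) * Real.exp (w * t ^ 2 / 2) :=
    (deriv_mul_exp_mul_sq_div_two w (fun t => w + w ^ 2 * t ^ 2) (fun t => 2 * w ^ 2 * t)
      (fun t => (((hasDerivAt_pow 2 t).const_mul (w ^ 2)).const_add w).congr_deriv
        (by push_cast; ring))).trans
      (by funext t; ring)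
  have d4 : deriv (fun t => (3 * w ^ 2 * t + w ^ 3 * t ^ 3) * Real.exp (w * t ^ 2 / 2))
      = fun t => (3 * w ^ 2 + 6 * w ^ 3 * t ^ 2 + w ^ 4 * t ^ 4) * Real.exp (w * t ^ 2 / 2) :=
    (deriv_mul_exp_mul_sq_div_two w (fun t => 3 * w ^ 2 * t + w ^ 3 * t ^ 3)
      (fun t => 3 * w ^ 2 + 3 * w ^ 3 * t ^ 2)
      (fun t => (((hasDerivAt_id t).const_mul (3 * w ^ 2)).add
        ((hasDerivAt_pow 3 t).const_mul (w ^ 3))).congr_deriv (by push_cast; ring))).trans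
      (by funext t; ring)
  simp only [iteratedDeriv_succ, iteratedDeriv_zero, d1, d2, d3, d4]
  simp

lemma integral_sq_gaussianReal (v : ℝ≥0) : ∫ x, x ^ 2 ∂gaussianReal 0 v = v := by
  rw [← variance_of_integral_eq_zero aemeasurable_id' (by simp)]
  exact variance_fun_id_gaussianReal

section GaussianLaw

variable {Ω : Type*} {mΩ : MeasurableSpace Ω} {μ : Measure Ω} {X : Ω → ℝ} {v : ℝ≥0}

lemma aemeasurable_of_map_eq_gaussianReal (h : μ.map X = gaussianReal 0 v) :
    AEMeasurable X μ :=
  AEMeasurable.of_map_ne_zero (by rw [h]; exact IsProbabilityMeasure.ne_zero _)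

lemma memLp_of_map_eq_gaussianReal (h : μ.map X = gaussianReal 0 v) {p : ℝ≥0∞} (hp : p ≠ ∞) :
    MemLp X p μ := by
  have hX := memLp_id_gaussianReal' (μ := 0) (v := v) p hp
  rw [← h] at hX
  exact (memLp_map_measure_iff aestronglyMeasurable_id
    (aemeasurable_of_map_eq_gaussianReal h)).mp hX

lemma integral_pow_four_of_map_eq_gaussianReal (h : μ.map X = gaussianReal 0 v) :
    ∫ ω, X ω ^ 4 ∂μ = 3 * (∫ ω, X ω ^ 2 ∂μ) ^ 2 := by
  have hX := aemeasurable_of_map_eq_gaussianReal h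
  rw [← integral_map (f := fun x => x ^ 4) hX (by fun_prop),
    ← integral_map (f := fun x => x ^ 2) hX (by fun_prop), h,
    integral_pow_four_gaussianReal, integral_sq_gaussianReal]

theorem integral_sq_mul_sq_of_map_eq_gaussianReal {X Y : Ω → ℝ}
    (hG : ∀ a b : ℝ, ∃ v : ℝ≥0, μ.map (fun ω => a * X ω + b * Y ω) = gaussianReal 0 v) :
    ∫ ω, X ω ^ 2 * Y ω ^ 2 ∂μ
      = (∫ ω, X ω ^ 2 ∂μ) * (∫ ω, Y ω ^ 2 ∂μ) + 2 * (∫ ω, X ω * Y ω ∂μ) ^ 2 := by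
  set Z : ℝ → ℝ → Ω → ℝ := fun a b ω => a * X ω + b * Y ω with hZ
  have hL (a b : ℝ) {p : ℝ≥0∞} (hp : p ≠ ∞) : MemLp (Z a b) p μ :=
    (hG a b).elim fun _ h => memLp_of_map_eq_gaussianReal h hp
  have h4 (a b : ℝ) : ∫ ω, Z a b ω ^ 4 ∂μ = 3 * (∫ ω, Z a b ω ^ 2 ∂μ) ^ 2 :=
    (hG a b).elim fun _ h => integral_pow_four_of_map_eq_gaussianReal h
  have hI2 (a b : ℝ) : Integrable (fun ω => Z a b ω ^ 2) μ := (hL a b (by simp)).integrable_sq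
  have hI4 (a b : ℝ) : Integrable (fun ω => Z a b ω ^ 4) μ :=
    (hL a b (p := (4 : ℕ)) (by simp)).integrable_pow (by norm_num)
  have hXY : ∫ ω, X ω * Y ω ∂μ = (∫ ω, Z 1 1 ω ^ 2 ∂μ - ∫ ω, Z 1 (-1) ω ^ 2 ∂μ) / 4 := by
    rw [← integral_sub (hI2 1 1) (hI2 1 (-1)), ← integral_div]
    congr 1; funext ω; simp only [hZ]; ring
  have hS : ∫ ω, Z 1 1 ω ^ 2 ∂μ + ∫ ω, Z 1 (-1) ω ^ 2 ∂μ
      = 2 * ∫ ω, Z 1 0 ω ^ 2 ∂μ + 2 * ∫ ω, Z 0 1 ω ^ 2 ∂μ := by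
    rw [← integral_add (hI2 1 1) (hI2 1 (-1)), ← integral_const_mul, ← integral_const_mul,
      ← integral_add ((hI2 1 0).const_mul 2) ((hI2 0 1).const_mul 2)]
    congr 1; funext ω; simp only [hZ]; ring
  have hX2Y2 : ∫ ω, X ω ^ 2 * Y ω ^ 2 ∂μ = (∫ ω, Z 1 1 ω ^ 4 ∂μ + ∫ ω, Z 1 (-1) ω ^ 4 ∂μ
      - 2 * ∫ ω, Z 1 0 ω ^ 4 ∂μ - 2 * ∫ ω, Z 0 1 ω ^ 4 ∂μ) / 12 := by
    have e : (fun ω => X ω ^ 2 * Y ω ^ 2) = fun ω => (Z 1 1 ω ^ 4 + Z 1 (-1) ω ^ 4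
        - 2 * Z 1 0 ω ^ 4 - 2 * Z 0 1 ω ^ 4) / 12 := by
      funext ω; simp only [hZ]; ring
    rw [e, integral_div, integral_sub, integral_sub, integral_add, integral_const_mul,
      integral_const_mul]
    all_goals fun_prop
  rw [hX2Y2, hXY, h4, h4, h4, h4, show X = Z 1 0 by simp [hZ], show Y = Z 0 1 by simp [hZ]]
  linear_combination (∫ ω, Z 1 1 ω ^ 2 ∂μ + ∫ ω, Z 1 (-1) ω ^ 2 ∂μ
    + 2 * ∫ ω, Z 1 0 ω ^ 2 ∂μ + 2 * ∫ ω, Z 0 1 ω ^ 2 ∂μ) / 8 * hS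

theorem covariance_sq_sq_of_map_eq_gaussianReal [IsProbabilityMeasure μ] {X Y : Ω → ℝ}
    (hG : ∀ a b : ℝ, ∃ v : ℝ≥0, μ.map (fun ω => a * X ω + b * Y ω) = gaussianReal 0 v) :
    cov[fun ω => X ω ^ 2, fun ω => Y ω ^ 2; μ] = 2 * (∫ ω, X ω * Y ω ∂μ) ^ 2 := by
  have hsq (a b : ℝ) : MemLp (fun ω => (a * X ω + b * Y ω) ^ 2) 2 μ := (hG a b).elim fun _ h => by
    simpa [sq] using (memLp_of_map_eq_gaussianReal h (p := 4) (by simp)).mul_of_four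
      (memLp_of_map_eq_gaussianReal h (by simp))
  rw [covariance_eq_sub (by simpa using hsq 1 0) (by simpa using hsq 0 1)]
  simp only [Pi.mul_apply]
  rw [integral_sq_mul_sq_of_map_eq_gaussianReal hG]
  ring

end GaussianLaw

/-- The paper's `[𝒫^ν, A]`, for `p = p_ν`. -/
def contract {ι : Type*} [Fintype ι] (p : ι → ℝ) (A : ι → ι → ι → ι → ℝ) : ℝ :=
  ∑ i, ∑ j, ∑ i', ∑ j', p i * p j * p i' * p j' * A i j i' j'

lemma contract_sub {ι : Type*} [Fintype ι] (p : ι → ℝ) (A B : ι → ι → ι → ι → ℝ) :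
    contract p (fun i j i' j' => A i j i' j' - B i j i' j') = contract p A - contract p B := by
  simp only [contract, mul_sub, Finset.sum_sub_distrib]

section Covariance

variable {Ω : Type*} {mΩ : MeasurableSpace Ω} {μ : Measure Ω} [IsFiniteMeasure μ]

lemma covariance_fun_sum_mul_fun_sum_mul {ι κ : Type*} [Fintype ι] [Fintype κ]
    (a : ι → ℝ) (b : κ → ℝ) {X : ι → Ω → ℝ} {Y : κ → Ω → ℝ}
    (hX : ∀ i, MemLp (X i) 2 μ) (hY : ∀ j, MemLp (Y j) 2 μ) :
    cov[fun ω => ∑ i, a i * X i ω, fun ω => ∑ j, b j * Y j ω; μ]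
      = ∑ i, ∑ j, a i * b j * cov[X i, Y j; μ] := by
  rw [covariance_fun_sum_fun_sum (fun i => (hX i).const_mul (a i))
    (fun j => (hY j).const_mul (b j))]
  simp only [covariance_const_mul_left, covariance_const_mul_right]
  exact Finset.sum_congr rfl fun i _ => Finset.sum_congr rfl fun j _ => by ring

lemma contract_covariance {ι : Type*} [Fintype ι] (p : ι → ℝ) {X Y : ι → ι → Ω → ℝ}
    (hX : ∀ i j, MemLp (X i j) 2 μ) (hY : ∀ i j, MemLp (Y i j) 2 μ) :
    contract p (fun i j i' j' => cov[X i j, Y i' j'; μ])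
      = cov[fun ω => ∑ i, ∑ j, p i * p j * X i j ω, fun ω => ∑ i, ∑ j, p i * p j * Y i j ω; μ] := by
  have h := covariance_fun_sum_mul_fun_sum_mul (μ := μ) (fun q : ι × ι => p q.1 * p q.2)
    (fun q : ι × ι => p q.1 * p q.2) (fun q => hX q.1 q.2) (fun q => hY q.1 q.2)
  simp only [Fintype.sum_prod_type] at h
  rw [h]
  simp only [contract, mul_assoc]

lemma contract_covariance_comm {ι : Type*} [Fintype ι] (p : ι → ℝ) {X Y : ι → ι → Ω → ℝ}
    (hX : ∀ i j, MemLp (X i j) 2 μ) (hY : ∀ i j, MemLp (Y i j) 2 μ) :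
    contract p (fun i j i' j' => cov[X i j, Y i' j'; μ])
      = contract p (fun i j i' j' => cov[Y i j, X i' j'; μ]) := by
  rw [contract_covariance p hX hY, contract_covariance p hY hX, covariance_comm]

end Covariance

/-- The paper's `ψ_{ij}`, with `Γ i j = κ_{ij}`. -/
noncomputable def corrPsi {ι : Type*} (Γ : Matrix ι ι ℝ) (i j : ι) (v : ι → ℝ) : ℝ :=
  Γ i j * (v i ^ 2 + v j ^ 2) / 2

section Contraction

variable {ι : Type*} [Fintype ι] {Γ : Matrix ι ι ℝ} {p : ι → ℝ} {ℓ : ℝ}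

lemma Matrix.IsSymm.sum_sum_mul_corrPsi (hΓ : Γ.IsSymm) (heig : Γ *ᵥ p = ℓ • p)
    (v : ι → ℝ) : ∑ i, ∑ j, p i * p j * corrPsi Γ i j v = ∑ i, ℓ * p i ^ 2 * v i ^ 2 := by
  set f : ι → ι → ℝ := fun i j => p i * p j * Γ i j * v i ^ 2 / 2
  have hsplit (i j : ι) : p i * p j * corrPsi Γ i j v = f i j + f j i := by
    simp only [corrPsi, f, hΓ.apply i j]
    ring
  have hrow (i : ι) : 2 * ∑ j, f i j = ℓ * p i ^ 2 * v i ^ 2 := by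
    have h : ∑ j, Γ i j * p j = ℓ * p i := by simpa [mulVec, dotProduct] using congrFun heig i
    rw [show 2 * ∑ j, f i j = p i * v i ^ 2 * ∑ j, Γ i j * p j by
      simp only [f, Finset.mul_sum]
      exact Finset.sum_congr rfl fun j _ => by ring, h]
    ring
  calc ∑ i, ∑ j, p i * p j * corrPsi Γ i j v
      = ∑ i, ∑ j, f i j + ∑ i, ∑ j, f j i := by simp only [hsplit, Finset.sum_add_distrib]
    _ = ∑ i, 2 * ∑ j, f i j := by
      rw [Finset.sum_comm (f := fun i j => f j i), ← two_mul, Finset.mul_sum]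
    _ = ∑ i, ℓ * p i ^ 2 * v i ^ 2 := Finset.sum_congr rfl fun i _ => hrow i

lemma Matrix.IsSymm.trace_sq_diagonal_mul_mul_diagonal [DecidableEq ι] (hΓ : Γ.IsSymm)
    (p : ι → ℝ) :
    trace ((diagonal p * Γ * diagonal p) ^ 2) = ∑ i, ∑ j, p i ^ 2 * p j ^ 2 * Γ i j ^ 2 := by
  simp only [sq, trace, diag_apply, mul_apply, diagonal_apply, ite_mul, mul_ite, zero_mul,
    mul_zero, Finset.sum_ite_eq, Finset.sum_ite_eq', Finset.mem_univ, if_true]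
  refine Finset.sum_congr rfl fun i _ => Finset.sum_congr rfl fun j _ => ?_
  rw [hΓ.apply i j]
  ring

end Contraction

lemma isSymm_of_integral_eval_mul_eval {ι : Type*} {μ : Measure (ι → ℝ)} {Γ : Matrix ι ι ℝ}
    (hcov : ∀ i j, ∫ v, v i * v j ∂μ = Γ i j) : Γ.IsSymm :=
  IsSymm.ext fun i j => by simp only [← hcov, mul_comm]

def IsCenteredGaussian {ι : Type*} [Fintype ι] (μ : Measure (ι → ℝ)) : Prop :=
  ∀ c : ι → ℝ, ∃ V : ℝ≥0, μ.map (fun v => c ⬝ᵥ v) = gaussianReal 0 V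

namespace IsCenteredGaussian

variable {ι : Type*} [Fintype ι] {μ : Measure (ι → ℝ)}

lemma memLp_dotProduct (hG : IsCenteredGaussian μ) (c : ι → ℝ) {p : ℝ≥0∞} (hp : p ≠ ∞) :
    MemLp (fun v => c ⬝ᵥ v) p μ :=
  (hG c).elim fun _ h => memLp_of_map_eq_gaussianReal h hp

lemma memLp_eval (hG : IsCenteredGaussian μ) (i : ι) {p : ℝ≥0∞} (hp : p ≠ ∞) :
    MemLp (fun v => v i) p μ := by
  classical
  simpa using hG.memLp_dotProduct (Pi.single i 1) hp

lemma memLp_eval_mul_eval (hG : IsCenteredGaussian μ) (i j : ι) :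
    MemLp (fun v => v i * v j) 2 μ :=
  (hG.memLp_eval i (by simp)).mul_of_four (hG.memLp_eval j (by simp))

lemma memLp_eval_sq (hG : IsCenteredGaussian μ) (i : ι) : MemLp (fun v => v i ^ 2) 2 μ := by
  simpa [sq] using hG.memLp_eval_mul_eval i i

lemma memLp_dotProduct_sq (hG : IsCenteredGaussian μ) (c : ι → ℝ) :
    MemLp (fun v => (c ⬝ᵥ v) ^ 2) 2 μ := by
  simpa [sq] using
    (hG.memLp_dotProduct c (p := 4) (by simp)).mul_of_four (hG.memLp_dotProduct c (by simp))

lemma memLp_corrPsi (hG : IsCenteredGaussian μ) (Γ : Matrix ι ι ℝ) (i j : ι) :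
    MemLp (corrPsi Γ i j) 2 μ := by
  convert ((hG.memLp_eval_sq i).add (hG.memLp_eval_sq j)).const_mul (Γ i j / 2) using 1
  funext v
  simp only [corrPsi, Pi.add_apply]
  ring

variable [IsProbabilityMeasure μ]

lemma covariance_sq_dotProduct_sq_dotProduct (hG : IsCenteredGaussian μ) (c d : ι → ℝ) :
    cov[fun v => (c ⬝ᵥ v) ^ 2, fun v => (d ⬝ᵥ v) ^ 2; μ]
      = 2 * (∫ v, (c ⬝ᵥ v) * (d ⬝ᵥ v) ∂μ) ^ 2 :=
  covariance_sq_sq_of_map_eq_gaussianReal fun a b => by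
    simpa [add_dotProduct, smul_dotProduct] using hG (a • c + b • d)

variable {Γ : Matrix ι ι ℝ}

lemma integral_eval_mul_dotProduct (hG : IsCenteredGaussian μ)
    (hcov : ∀ i j, ∫ v, v i * v j ∂μ = Γ i j) (i : ι) (d : ι → ℝ) :
    ∫ v, v i * (d ⬝ᵥ v) ∂μ = (Γ *ᵥ d) i := by
  have e : (fun v : ι → ℝ => v i * (d ⬝ᵥ v)) = fun v => ∑ j, d j * (v i * v j) := by
    funext v
    simp only [dotProduct, Finset.mul_sum]
    exact Finset.sum_congr rfl fun j _ => by ring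
  rw [e, integral_finsetSum _ fun j _ =>
    ((hG.memLp_eval_mul_eval i j).integrable one_le_two).const_mul (d j)]
  simp only [integral_const_mul, hcov, mulVec, dotProduct, mul_comm]

lemma covariance_sq_eval_sq_dotProduct (hG : IsCenteredGaussian μ)
    (hcov : ∀ i j, ∫ v, v i * v j ∂μ = Γ i j) (i : ι) (d : ι → ℝ) :
    cov[fun v => v i ^ 2, fun v => (d ⬝ᵥ v) ^ 2; μ] = 2 * (Γ *ᵥ d) i ^ 2 := by
  classical
  simpa [hG.integral_eval_mul_dotProduct hcov] using
    hG.covariance_sq_dotProduct_sq_dotProduct (Pi.single i 1) d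

lemma covariance_sum_mul_sq_eval_sq_dotProduct (hG : IsCenteredGaussian μ)
    (hcov : ∀ i j, ∫ v, v i * v j ∂μ = Γ i j) (w d : ι → ℝ) :
    cov[fun v => ∑ i, w i * v i ^ 2, fun v => (d ⬝ᵥ v) ^ 2; μ]
      = 2 * ∑ i, w i * (Γ *ᵥ d) i ^ 2 := by
  rw [covariance_fun_sum_left (X := fun i v => w i * v i ^ 2)
    (fun i => (hG.memLp_eval_sq i).const_mul (w i)) (hG.memLp_dotProduct_sq d), Finset.mul_sum]
  simp only [covariance_const_mul_left, hG.covariance_sq_eval_sq_dotProduct hcov]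
  exact Finset.sum_congr rfl fun i _ => by ring

lemma covariance_sum_mul_sq_eval (hG : IsCenteredGaussian μ)
    (hcov : ∀ i j, ∫ v, v i * v j ∂μ = Γ i j) (w : ι → ℝ) :
    cov[fun v => ∑ i, w i * v i ^ 2, fun v => ∑ j, w j * v j ^ 2; μ]
      = 2 * ∑ i, ∑ j, w i * w j * Γ i j ^ 2 := by
  classical
  rw [covariance_fun_sum_mul_fun_sum_mul w w hG.memLp_eval_sq hG.memLp_eval_sq, Finset.mul_sum]
  refine Finset.sum_congr rfl fun i _ => ?_
  rw [Finset.mul_sum]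
  refine Finset.sum_congr rfl fun j _ => ?_
  have h := hG.covariance_sq_eval_sq_dotProduct hcov i (Pi.single j 1)
  simp only [single_one_dotProduct, mulVec_single_one, col_apply] at h
  rw [h]
  ring

variable {p : ι → ℝ} {ℓ : ℝ}

theorem contract_covariance_corrPsi_corrPsi [DecidableEq ι] (hG : IsCenteredGaussian μ)
    (hcov : ∀ i j, ∫ v, v i * v j ∂μ = Γ i j) (heig : Γ *ᵥ p = ℓ • p) :
    contract p (fun i j i' j' => cov[corrPsi Γ i j, corrPsi Γ i' j'; μ])
      = 2 * ℓ ^ 2 * trace ((diagonal p * Γ * diagonal p) ^ 2) := by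
  have hΓ := isSymm_of_integral_eval_mul_eval hcov
  simp only [contract_covariance p (hG.memLp_corrPsi Γ) (hG.memLp_corrPsi Γ),
    hΓ.sum_sum_mul_corrPsi heig, hG.covariance_sum_mul_sq_eval hcov,
    hΓ.trace_sq_diagonal_mul_mul_diagonal, Finset.mul_sum]
  exact Finset.sum_congr rfl fun i _ => Finset.sum_congr rfl fun j _ => by ring

theorem contract_covariance_corrPsi_mul [DecidableEq ι] (hG : IsCenteredGaussian μ)
    (hcov : ∀ i j, ∫ v, v i * v j ∂μ = Γ i j) (heig : Γ *ᵥ p = ℓ • p) :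
    contract p (fun i j i' j' => cov[corrPsi Γ i j, fun v => v i' * v j'; μ])
      = 2 * ℓ ^ 3 * trace (diagonal p ^ 4) := by
  have hΓ := isSymm_of_integral_eval_mul_eval hcov
  have hχ : (fun v : ι → ℝ => ∑ i, ∑ j, p i * p j * (v i * v j)) = fun v => (p ⬝ᵥ v) ^ 2 := by
    funext v
    simp only [dotProduct, sq, Finset.sum_mul_sum]
    exact Finset.sum_congr rfl fun i _ => Finset.sum_congr rfl fun j _ => by ring
  simp only [contract_covariance p (hG.memLp_corrPsi Γ) hG.memLp_eval_mul_eval,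
    hΓ.sum_sum_mul_corrPsi heig, hχ, hG.covariance_sum_mul_sq_eval_sq_dotProduct hcov, heig,
    diagonal_pow, trace_diagonal, Finset.mul_sum]
  refine Finset.sum_congr rfl fun i _ => ?_
  simp only [Pi.smul_apply, smul_eq_mul, Pi.pow_apply]
  ring

end IsCenteredGaussian

theorem gaussian_kappa_check_contractions_general
    {m : ℕ} (μ : Measure (Fin m → ℝ)) [IsProbabilityMeasure μ]
    (Γ : Matrix (Fin m) (Fin m) ℝ)
    (hcov : ∀ i j, (∫ v, v i * v j ∂μ) = Γ i j)
    (hGauss : ∀ c : Fin m → ℝ,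
      μ.map (fun v => ∑ i, c i * v i)
        = gaussianReal 0 (Real.toNNReal (∑ i, ∑ j, c i * Γ i j * c j)))
    (pν : Fin m → ℝ) (ℓν : ℝ)
    (heig : Γ.mulVec pν = ℓν • pν) :
    -- with the following abbreviations:
    ∀ ψ χ : Fin m → Fin m → (Fin m → ℝ) → ℝ,
      (∀ i j v, ψ i j v = Γ i j * ((v i) ^ 2 + (v j) ^ 2) / 2) →
      (∀ i j v, χ i j v = v i * v j) →
    ∀ cov : ((Fin m → ℝ) → ℝ) → ((Fin m → ℝ) → ℝ) → ℝ,
      (∀ f g, cov f g = (∫ v, f v * g v ∂μ) - (∫ v, f v ∂μ) * (∫ v, g v ∂μ)) →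
    ∀ br : (Fin m → Fin m → Fin m → Fin m → ℝ) → ℝ,
      (∀ A, br A = ∑ i, ∑ j, ∑ i', ∑ j', pν i * pν j * pν i' * pν j' * A i j i' j') →
      (br (fun i j i' j' => cov (ψ i j) (ψ i' j'))
          = 2 * ℓν ^ 2 *
            Matrix.trace ((Matrix.diagonal pν * Γ * Matrix.diagonal pν) ^ 2)) ∧
      (br (fun i j i' j' => cov (ψ i j) (χ i' j'))
          = 2 * ℓν ^ 3 * Matrix.trace (Matrix.diagonal pν ^ 4)) ∧
      (br (fun i j i' j' =>
            cov (ψ i j) (ψ i' j') - cov (ψ i j) (χ i' j') - cov (χ i j) (ψ i' j'))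
          = 2 * ℓν ^ 2 *
              Matrix.trace ((Matrix.diagonal pν * Γ * Matrix.diagonal pν) ^ 2)
            - 4 * ℓν ^ 3 * Matrix.trace (Matrix.diagonal pν ^ 4)) := by
  intro ψ χ hψ hχ cov hcovdef br hbr
  obtain rfl : ψ = corrPsi Γ := funext fun i => funext fun j => funext (hψ i j)
  obtain rfl : χ = fun i j v => v i * v j := funext fun i => funext fun j => funext (hχ i j)
  obtain rfl : br = contract pν := funext hbr
  have hG : IsCenteredGaussian μ := fun c => ⟨_, hGauss c⟩
  have hcov' (f g : (Fin m → ℝ) → ℝ) (hf : MemLp f 2 μ) (hg : MemLp g 2 μ) :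
      cov f g = cov[f, g; μ] := by
    rw [hcovdef, covariance_eq_sub hf hg]
    rfl
  simp only [hcov', hG.memLp_corrPsi, hG.memLp_eval_mul_eval, contract_sub]
  rw [contract_covariance_comm pν hG.memLp_eval_mul_eval (hG.memLp_corrPsi Γ),
    hG.contract_covariance_corrPsi_corrPsi hcov heig,
    hG.contract_covariance_corrPsi_mul hcov heig]
  exact ⟨rfl, rfl, by ring⟩

/-- **Gaussian evaluation of the correlation-specific cumulant contractions**
(Appendix A.1): let `ξ̄` be a centered Gaussian vector with unit variances and correlation
matrix `Γ = (κ_{ij})`, and `p_ν` a unit eigenvector of `Γ` with eigenvalue `ℓ_ν`. With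
`ψ_{ij} = κ_{ij} (ξ̄_i² + ξ̄_j²)/2`, `χ_{ij} = ξ̄_i ξ̄_j`,
`κ̌₁_{iji'j'} = Cov(ψ_{ij}, ψ_{i'j'})`, `κ̌₂_{iji'j'} = Cov(ψ_{ij}, χ_{i'j'})` and
`κ̌ = κ̌₁ - 2κ̌₂` (after contraction), one has
`[𝒫^ν, κ̌₁] = 2 ℓ_ν² tr (P_{D,ν} Γ P_{D,ν})²`, `[𝒫^ν, κ̌₂] = 2 ℓ_ν³ tr P_{D,ν}⁴` and hence
`[𝒫^ν, κ̌] = 2 ℓ_ν² tr (P_{D,ν} Γ P_{D,ν})² - 4 ℓ_ν³ tr P_{D,ν}⁴`. -/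
theorem gaussian_kappa_check_contractions
    {m : ℕ} (μ : Measure (Fin m → ℝ)) [IsProbabilityMeasure μ]
    (Γ : Matrix (Fin m) (Fin m) ℝ)
    (hcov : ∀ i j, (∫ v, v i * v j ∂μ) = Γ i j)
    (hdiag : ∀ i, Γ i i = 1)
    (hGauss : ∀ c : Fin m → ℝ,
      μ.map (fun v => ∑ i, c i * v i)
        = gaussianReal 0 (Real.toNNReal (∑ i, ∑ j, c i * Γ i j * c j)))
    (pν : Fin m → ℝ) (ℓν : ℝ)
    (hunit : ∑ i, (pν i) ^ 2 = 1)
    (heig : Γ.mulVec pν = ℓν • pν) :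
    -- with the following abbreviations:
    ∀ ψ χ : Fin m → Fin m → (Fin m → ℝ) → ℝ,
      (∀ i j v, ψ i j v = Γ i j * ((v i) ^ 2 + (v j) ^ 2) / 2) →
      (∀ i j v, χ i j v = v i * v j) →
    ∀ cov : ((Fin m → ℝ) → ℝ) → ((Fin m → ℝ) → ℝ) → ℝ,
      (∀ f g, cov f g = (∫ v, f v * g v ∂μ) - (∫ v, f v ∂μ) * (∫ v, g v ∂μ)) →
    ∀ br : (Fin m → Fin m → Fin m → Fin m → ℝ) → ℝ,
      (∀ A, br A = ∑ i, ∑ j, ∑ i', ∑ j', pν i * pν j * pν i' * pν j' * A i j i' j') →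
      (br (fun i j i' j' => cov (ψ i j) (ψ i' j'))
          = 2 * ℓν ^ 2 *
            Matrix.trace ((Matrix.diagonal pν * Γ * Matrix.diagonal pν) ^ 2)) ∧
      (br (fun i j i' j' => cov (ψ i j) (χ i' j'))
          = 2 * ℓν ^ 3 * Matrix.trace (Matrix.diagonal pν ^ 4)) ∧
      (br (fun i j i' j' =>
            cov (ψ i j) (ψ i' j') - cov (ψ i j) (χ i' j') - cov (χ i j) (ψ i' j'))
          = 2 * ℓν ^ 2 *
              Matrix.trace ((Matrix.diagonal pν * Γ * Matrix.diagonal pν) ^ 2)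
            - 4 * ℓν ^ 3 * Matrix.trace (Matrix.diagonal pν ^ 4)) :=
  gaussian_kappa_check_contractions_general μ Γ hcov hGauss pν ℓν heig
end
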